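/- There exist a finite set M, an additive valuation V, and an entitlement vector t of size n = 3, together with an index i and positive integers l,d with l/d ≤ tᵢ, such that V(MMS(M,l,d)) > WMMS(M,t,i). Concretely, take M = {a,b} with V(a)=40, V(b)=60 and t = (0.6, 0.2, 0.2): then every partition of M into 3 parts has an empty part, so WMMS(M,t,i) = 0 for all i, while with i=1, l=1, d=2, V(MMS(M,1,2)) = 40 > 0. -/

import Mathlib

open Finset

/-- A partition of the finite type `α` into `d` (possibly empty) pairwise-disjoint parts. -/
def IsPartition {α : Type} [Fintype α] [DecidableEq α] (d : ℕ) (Y : Fin d → Finset α) : Prop :=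
  (∀ i j : Fin d, i ≠ j → Disjoint (Y i) (Y j)) ∧
    Finset.univ.biUnion Y = (Finset.univ : Finset α)

/-- `MMSLe pref l d l' d'` says that the `l`-out-of-`d` maximin share of `α` is at least as good
(w.r.t. `pref`, where `pref A B` means `A ⪰ B`) as the `l'`-out-of-`d'` maximin share:
for every `d'`-partition `Y'` there is a `d`-partition `Y` whose minimal `l`-part union is
`⪰` some `l'`-part union of `Y'` (hence `⪰` the minimal one). -/
def MMSLe {α : Type} [Fintype α] [DecidableEq α]
    (pref : Finset α → Finset α → Prop) (l d l' d' : ℕ) : Prop :=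
  ∀ Y' : Fin d' → Finset α, IsPartition d' Y' →
    ∃ Y : Fin d → Finset α, IsPartition d Y ∧
      ∀ S : Finset (Fin d), S.card = l →
        ∃ S' : Finset (Fin d'), S'.card = l' ∧ pref (S.biUnion Y) (S'.biUnion Y')

/-- The value of the `l`-out-of-`d` maximin share w.r.t. a real-valued valuation `v`. -/
noncomputable def mmsValR {α : Type} [Fintype α] [DecidableEq α]
    (v : Finset α → ℝ) (l d : ℕ) : ℝ :=
  sSup {x | ∃ Y : Fin d → Finset α, IsPartition d Y ∧
    x = sInf {y | ∃ S : Finset (Fin d), S.card = l ∧ y = v (S.biUnion Y)}}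

/-- The weighted maximin share of agent `i` with entitlements `t` (Farhadi et al.):
`tᵢ` times the maximum over `n`-partitions of `minⱼ V(Yⱼ)/tⱼ`. -/
noncomputable def wmms {α : Type} [Fintype α] [DecidableEq α]
    (v : α → ℝ) (n : ℕ) (t : Fin n → ℝ) (i : Fin n) : ℝ :=
  t i * sSup {x | ∃ Y : Fin n → Finset α, IsPartition n Y ∧
    x = ⨅ j, (∑ a ∈ Y j, v a) / t j}

/- With two goods and three agents every partition leaves some agent empty-handed, so the
weighted maximin share vanishes for everybody; the `1`-out-of-`2` maximin share, by contrast,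
is realised by splitting the goods into singletons and is worth `min 40 60 = 40`. -/

variable {α : Type} [Fintype α] [DecidableEq α]

theorem IsPartition.sum_card {d : ℕ} {Y : Fin d → Finset α} (hY : IsPartition d Y) :
    ∑ j, (Y j).card = Fintype.card α := by
  rw [← Finset.card_biUnion fun i _ j _ hij => hY.1 i j hij, hY.2, Finset.card_univ]

theorem IsPartition.exists_eq_empty_of_card_lt {d : ℕ} {Y : Fin d → Finset α}
    (hY : IsPartition d Y) (hcard : Fintype.card α < d) : ∃ j, Y j = ∅ := by
  by_contra! hne
  have : d ≤ Fintype.card α :=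
    calc d = ∑ _j : Fin d, 1 := by simp
      _ ≤ ∑ j, (Y j).card := Finset.sum_le_sum fun j _ => Finset.card_pos.mpr (hne j)
      _ = Fintype.card α := hY.sum_card
  omega

theorem wmms_eq_zero_of_card_lt {v : α → ℝ} {n : ℕ} {t : Fin n → ℝ} (i : Fin n)
    (hv : ∀ a, 0 ≤ v a) (ht : ∀ j, 0 ≤ t j) (hcard : Fintype.card α < n) :
    wmms v n t i = 0 := by
  have hsub : {x | ∃ Y : Fin n → Finset α, IsPartition n Y ∧
      x = ⨅ j, (∑ a ∈ Y j, v a) / t j} ⊆ {0} := by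
    rintro _ ⟨Y, hY, rfl⟩
    obtain ⟨j₀, hj₀⟩ := hY.exists_eq_empty_of_card_lt hcard
    have : Nonempty (Fin n) := ⟨j₀⟩
    refine le_antisymm ?_ (le_ciInf fun j => div_nonneg (sum_nonneg fun a _ => hv a) (ht j))
    calc ⨅ j, (∑ a ∈ Y j, v a) / t j ≤ (∑ a ∈ Y j₀, v a) / t j₀ :=
          ciInf_le (Set.finite_range _).bddBelow j₀
      _ = 0 := by simp [hj₀]
  -- `sSup ∅ = 0` in `ℝ`, so no partition needs to be exhibited
  rcases Set.subset_singleton_iff_eq.mp hsub with h | h <;> simp [wmms, h]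

theorem le_mmsValR {v : Finset α → ℝ} {l d : ℕ} {Y : Fin d → Finset α} {c : ℝ}
    (hY : IsPartition d Y) (hld : l ≤ d) (hc : ∀ S : Finset (Fin d), S.card = l →
      c ≤ v (S.biUnion Y)) : c ≤ mmsValR v l d := by
  have hne : {y | ∃ S : Finset (Fin d), S.card = l ∧ y = v (S.biUnion Y)}.Nonempty := by
    obtain ⟨S, -, hS⟩ := Finset.exists_subset_card_eq (s := (univ : Finset (Fin d)))
      (by simpa using hld)
    exact ⟨_, S, hS, rfl⟩
  have hbdd : BddAbove {x | ∃ Y : Fin d → Finset α, IsPartition d Y ∧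
      x = sInf {y | ∃ S : Finset (Fin d), S.card = l ∧ y = v (S.biUnion Y)}} := by
    refine ((Set.finite_range fun Y : Fin d → Finset α =>
      sInf {y | ∃ S : Finset (Fin d), S.card = l ∧ y = v (S.biUnion Y)}).subset ?_).bddAbove
    rintro _ ⟨Y, -, rfl⟩
    exact ⟨Y, rfl⟩
  refine (le_csInf hne ?_).trans (le_csSup hbdd ⟨Y, hY, rfl⟩)
  rintro _ ⟨S, hS, rfl⟩
  exact hc S hS

theorem stmt15 :
    ∃ (M : Type) (iF : Fintype M) (iD : DecidableEq M) (v : M → ℝ) (t : Fin 3 → ℝ)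
      (i : Fin 3) (l d : ℕ),
      (∀ a, 0 ≤ v a) ∧ (∀ j, 0 < t j) ∧ (∑ j, t j = 1) ∧
      1 ≤ l ∧ l ≤ d ∧ (l : ℝ) / d ≤ t i ∧
      @wmms M iF iD v 3 t i < @mmsValR M iF iD (fun S => ∑ a ∈ S, v a) l d := by
  have hv : ∀ a, (0 : ℝ) ≤ ![40, 60] a := by intro a; fin_cases a <;> norm_num
  have ht : ∀ j, (0 : ℝ) < ![0.6, 0.2, 0.2] j := by intro j; fin_cases j <;> norm_num
  refine ⟨Fin 2, inferInstance, inferInstance, ![40, 60], ![0.6, 0.2, 0.2], 0, 1, 2,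
    hv, ht, by norm_num [Fin.sum_univ_succ], le_rfl, one_le_two, by norm_num, ?_⟩
  have hsingletons : IsPartition 2 (![{0}, {1}] : Fin 2 → Finset (Fin 2)) := by
    constructor <;> decide
  rw [wmms_eq_zero_of_card_lt 0 hv (fun j => (ht j).le) (by simp)]
  refine lt_of_lt_of_le (by norm_num : (0 : ℝ) < 40) (le_mmsValR hsingletons one_le_two ?_)
  intro S hS
  obtain ⟨j, rfl⟩ := Finset.card_eq_one.mp hS
  fin_cases j <;> norm_num
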